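/- arXiv:1103.5195 — 3 statements merged into one kernel-verified Lean document; each statement's English description precedes it below -/
import Mathlib

section
/- Let $\theta$ be an infinite cardinal with countable cofinality $\mathrm{cf}(\theta) = \aleph_0$. Then there exists a coloring $c : \theta \times \omega \to 2$ such that for every $H \subseteq \theta$ with $|H| = \theta$ and every infinite $B \subseteq \omega$, the restriction of $c$ to $H \times B$ is not constant. In other words, $\binom{\theta}{\omega} \not\to \binom{\theta}{\omega}^{1,1}_2$. -/
/-!
Since `cf θ = ω` there is a sequence `g : ℕ → θ` tending to the top of `θ`; colour `(a, n)` by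
whether `g n ≤ a`. Colour `0` on `H × B` with `B` infinite is impossible as soon as `H ∋ a`,
because `a < g n` for all large `n`. Colour `1` puts `H` below a single `g n`, and initial
segments of `θ` have size `< θ`.
-/

open Cardinal Filter Set

namespace Order

variable {α : Type*}

theorem isCountablyGenerated_atTop_of_cof_le_aleph0 [Preorder α] (h : cof α ≤ ℵ₀) :
    (atTop : Filter α).IsCountablyGenerated := by
  obtain ⟨s, hs, hcard⟩ := exists_cof_eq α
  rw [atTop_eq_generate_of_forall_exists_le hs]
  exact ⟨_, (le_aleph0_iff_set_countable.1 (hcard ▸ h)).image _, rfl⟩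

theorem exists_seq_tendsto_atTop_of_cof_eq_aleph0 [LinearOrder α] (h : cof α = ℵ₀) :
    ∃ g : ℕ → α, Tendsto g atTop atTop := by
  have : Nonempty α := cof_ne_zero_iff.1 (h ▸ aleph0_ne_zero)
  have := isCountablyGenerated_atTop_of_cof_le_aleph0 h.le
  exact exists_seq_tendsto atTop

theorem noMaxOrder_of_cof_eq_aleph0 [LinearOrder α] (h : cof α = ℵ₀) : NoMaxOrder α :=
  have := cof_ne_one_iff.1 (h ▸ one_lt_aleph0.ne')
  NoTopOrder.to_noMaxOrder α

end Order

section LevelColoring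

variable {α : Type*} [LinearOrder α] {g : ℕ → α}

/-- With `g` in the role of the paper's `θₙ`, colour `0` means that `a` has reached level `n`. -/
def levelColoring (g : ℕ → α) (p : α × ℕ) : Fin 2 :=
  if g p.2 ≤ p.1 then 0 else 1

theorem levelColoring_eq_zero_iff {a : α} {n : ℕ} : levelColoring g (a, n) = 0 ↔ g n ≤ a := by
  unfold levelColoring; split_ifs <;> simp_all

theorem levelColoring_eq_one_iff {a : α} {n : ℕ} : levelColoring g (a, n) = 1 ↔ a < g n := by
  unfold levelColoring; split_ifs <;> simp_all

theorem eq_empty_of_levelColoring_eq_zero [NoMaxOrder α] (hg : Tendsto g atTop atTop)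
    {H : Set α} {B : Set ℕ} (hB : B.Infinite)
    (hc : ∀ a ∈ H, ∀ n ∈ B, levelColoring g (a, n) = 0) : H = ∅ := by
  refine eq_empty_of_forall_notMem fun a ha => ?_
  obtain ⟨n, hnB, hn⟩ :=
    ((Nat.frequently_atTop_iff_infinite.2 hB).and_eventually (hg.eventually_gt_atTop a)).exists
  exact (levelColoring_eq_zero_iff.1 (hc a ha n hnB)).not_gt hn

theorem eq_empty_or_subset_Iio_of_levelColoring_eq [NoMaxOrder α] (hg : Tendsto g atTop atTop)
    {H : Set α} {B : Set ℕ} (hB : B.Infinite) {i : Fin 2}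
    (hc : ∀ a ∈ H, ∀ n ∈ B, levelColoring g (a, n) = i) : H = ∅ ∨ ∃ x, H ⊆ Iio x := by
  fin_cases i
  · exact .inl (eq_empty_of_levelColoring_eq_zero hg hB hc)
  · obtain ⟨n, hn⟩ := hB.nonempty
    exact .inr ⟨g n, fun a ha => levelColoring_eq_one_iff.1 (hc a ha n hn)⟩

end LevelColoring

theorem Cardinal.mk_lt_of_subset_Iio_toType_ord {θ : Cardinal} {H : Set θ.ord.ToType}
    {x : θ.ord.ToType} (hH : H ⊆ Iio x) : #H < θ :=
  (mk_le_mk_of_subset hH).trans_lt (by simpa using mk_Iio_lt x)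

theorem negative_countable_cofinality_general (θ : Cardinal)
    (hcof : θ.ord.cof = ℵ₀) :
    ∃ c : θ.ord.ToType × ℕ → Fin 2,
      ∀ (H : Set θ.ord.ToType) (B : Set ℕ),
        #H = θ → B.Infinite →
          ¬ ∃ i : Fin 2, ∀ α ∈ H, ∀ n ∈ B, c (α, n) = i := by
  have hcofType : Order.cof θ.ord.ToType = ℵ₀ := by rwa [Ordinal.cof_toType]
  have := Order.noMaxOrder_of_cof_eq_aleph0 hcofType
  obtain ⟨g, hg⟩ := Order.exists_seq_tendsto_atTop_of_cof_eq_aleph0 hcofType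
  refine ⟨levelColoring g, fun H B hH hB ⟨i, hc⟩ => ?_⟩
  rcases eq_empty_or_subset_Iio_of_levelColoring_eq hg hB hc with rfl | ⟨x, hx⟩
  · have hθ : θ = 0 := by simpa using hH.symm
    exact aleph0_ne_zero (by simpa [hθ] using hcof.symm)
  · exact (mk_lt_of_subset_Iio_toType_ord hx).ne hH

/-- If `cf(θ) = ℵ₀` then the strong polarized relation `(θ, ω) → (θ, ω)` fails. -/
theorem negative_countable_cofinality (θ : Cardinal) (hθ : ℵ₀ ≤ θ)
    (hcof : θ.ord.cof = ℵ₀) :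
    ∃ c : θ.ord.ToType × ℕ → Fin 2,
      ∀ (H : Set θ.ord.ToType) (B : Set ℕ),
        #H = θ → B.Infinite →
          ¬ ∃ i : Fin 2, ∀ α ∈ H, ∀ n ∈ B, c (α, n) = i :=
  negative_countable_cofinality_general θ hcof
end

section
/- Let $\theta$ be a cardinal with $\aleph_0 \leq \theta < \mathfrak{s}$ (the splitting number) and $\mathrm{cf}(\theta) > \aleph_0$. Then $\binom{\theta}{\omega} \to \binom{\theta}{\omega}^{1,1}_2$: for every coloring $c : \theta \times \omega \to 2$ there exist $H \subseteq \theta$ with $|H| = \theta$ and an infinite $B \subseteq \omega$ such that $c$ is constant on $H \times B$. -/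
/-!
Colour the row of `α` by `S α = {n | c (α, n) = 0}`. Fewer than `𝔰` sets do not split every
infinite set, so some infinite `B` is, for every `α`, almost contained in `S α` or in its
complement: beyond some `m α` the row of `α` is constant with value `i α` on `B`. The map
`α ↦ (i α, m α)` has countable range, so as `cf θ > ω` one of its fibres `H` has size `θ`, and
`c` is constant on `H × (B \ m)` for the common value `(i, m)`.
-/

universe u

open Cardinal

/-- A family `F` of subsets of `ℕ` is splitting if every infinite `B ⊆ ℕ` is
split by some member of `F`. -/
def IsSplittingFamily (F : Set (Set ℕ)) : Prop :=
  ∀ B : Set ℕ, B.Infinite → ∃ S ∈ F, (B ∩ S).Infinite ∧ (B \ S).Infinite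

/-- The splitting number `𝔰`. -/
noncomputable def splittingNumber : Cardinal :=
  sInf { c : Cardinal | ∃ F : Set (Set ℕ), #F = c ∧ IsSplittingFamily F }

theorem exists_unsplit_of_mk_lt_splittingNumber {F : Set (Set ℕ)} (hF : #F < splittingNumber) :
    ∃ B : Set ℕ, B.Infinite ∧ ∀ S ∈ F, (B ∩ S).Finite ∨ (B \ S).Finite := by
  have hF' : ¬IsSplittingFamily F := fun h => hF.not_ge (csInf_le' ⟨F, rfl, h⟩)
  simpa [IsSplittingFamily, or_iff_not_imp_left] using hF'

theorem Set.Finite.exists_forall_ge_notMem {s : Set ℕ} (hs : s.Finite) :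
    ∃ m, ∀ n ≥ m, n ∉ s :=
  Filter.eventually_atTop.1 (Nat.cofinite_eq_atTop ▸ hs.eventually_cofinite_notMem)

theorem exists_eventually_eq_of_unsplit {B : Set ℕ} (c : ℕ → Fin 2)
    (h : (B ∩ {n | c n = 0}).Finite ∨ (B \ {n | c n = 0}).Finite) :
    ∃ i : Fin 2, ∃ m, ∀ n ∈ B, m ≤ n → c n = i := by
  rcases h with h | h
  · obtain ⟨m, hm⟩ := h.exists_forall_ge_notMem
    exact ⟨1, m, fun n hn hmn => Fin.eq_one_of_ne_zero _ fun h0 => hm n hmn ⟨hn, h0⟩⟩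
  · obtain ⟨m, hm⟩ := h.exists_forall_ge_notMem
    exact ⟨0, m, fun n hn hmn => by_contra fun h0 => hm n hmn ⟨hn, h0⟩⟩

theorem exists_mk_preimage_eq_of_countable {α β : Type u} [Countable β] (f : α → β)
    (h : ℵ₀ < (#α).ord.cof) : ∃ b, #(f ⁻¹' {b}) = #α :=
  infinite_pigeonhole f (h.le.trans ((#α).ord.cof_le_card.trans_eq (card_ord _)))
    (mk_le_aleph0.trans_lt h)

theorem polarized_below_splitting_general (θ : Cardinal)
    (hθs : θ < splittingNumber) (hcof : ℵ₀ < θ.ord.cof) :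
    ∀ c : θ.ord.ToType × ℕ → Fin 2,
      ∃ (H : Set θ.ord.ToType) (B : Set ℕ) (i : Fin 2),
        #H = θ ∧ B.Infinite ∧ ∀ α ∈ H, ∀ n ∈ B, c (α, n) = i := by
  intro c
  have hmk : #θ.ord.ToType = θ := mk_ord_toType θ
  obtain ⟨B, hB, hunsplit⟩ := exists_unsplit_of_mk_lt_splittingNumber
    (F := Set.range fun α => {n | c (α, n) = 0}) (mk_range_le.trans_lt (hmk.trans_lt hθs))
  choose i m hm using fun α =>
    exists_eventually_eq_of_unsplit (fun n => c (α, n)) (hunsplit _ ⟨α, rfl⟩)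
  obtain ⟨⟨i₀, m₀⟩, hfiber⟩ :=
    exists_mk_preimage_eq_of_countable (fun α => (i α, m α)) (by rwa [hmk])
  refine ⟨_, B \ Set.Iio m₀, i₀, hfiber.trans hmk, hB.sdiff (Set.finite_Iio m₀), ?_⟩
  rintro α hα n ⟨hnB, hn⟩
  obtain ⟨rfl, rfl⟩ := Prod.ext_iff.1 hα
  exact hm α n hnB (not_lt.1 hn)

/-- Below `𝔰`, uncountable cofinality implies the strong polarized relation
`(θ, ω) → (θ, ω)` with two colors. -/
theorem polarized_below_splitting (θ : Cardinal) (hθ : ℵ₀ ≤ θ)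
    (hθs : θ < splittingNumber) (hcof : ℵ₀ < θ.ord.cof) :
    ∀ c : θ.ord.ToType × ℕ → Fin 2,
      ∃ (H : Set θ.ord.ToType) (B : Set ℕ) (i : Fin 2),
        #H = θ ∧ B.Infinite ∧ ∀ α ∈ H, ∀ n ∈ B, c (α, n) = i :=
  polarized_below_splitting_general θ hθs hcof
end

section
/- Let $\theta$ be a cardinal with $\aleph_0 \leq \theta < \mathfrak{s}$. Then $\binom{\theta}{\omega} \to \binom{\theta}{\omega}^{1,1}_2$ holds if and only if $\mathrm{cf}(\theta) > \aleph_0$. -/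
/-!
If `cf θ = ω`, fix a monotone cofinal sequence `g : ω → θ` and colour `(α, n)` by whether
`α ≤ g n`: a homogeneous `H × B` of colour "≤" puts `H` below a single `g n`, so `|H| < θ`,
while colour ">" puts `H` above all `g n` with `n ∈ B`, i.e. above a cofinal set.

If `cf θ > ω` and `θ < 𝔰`, the `θ` sets `{n | c (α, n) = 1}` do not form a splitting family,
so some infinite `B` is split by none of them: each row `c (α, ·)` is constant, say `i α`, on
`B` above some `m α`. There are only countably many pairs `(m α, i α)`, so one of them is
shared by `θ` many `α`, and these together with `B ∩ [m, ∞)` are homogeneous.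
-/

open Cardinal

open Ordinal Set

/-- `(#α, ω) → (κ, ω)^{1,1}_2`, with the rows indexed by the type `α`. -/
def PolarizedPartition (α : Type*) (κ : Cardinal) : Prop :=
  ∀ c : α × ℕ → Fin 2, ∃ (H : Set α) (B : Set ℕ) (i : Fin 2),
    #H = κ ∧ B.Infinite ∧ ∀ a ∈ H, ∀ n ∈ B, c (a, n) = i

section CountableCofinality

variable {α : Type*} [LinearOrder α]

theorem exists_monotone_cofinal_seq [Nonempty α] (h : Order.cof α ≤ ℵ₀) :
    ∃ g : ℕ → α, Monotone g ∧ ∀ a, ∃ n, a ≤ g n := by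
  obtain ⟨s, hs, hcard⟩ := Order.exists_cof_eq α
  have hcount : s.Countable := by
    rw [← countable_coe_iff, ← mk_le_aleph0_iff, hcard]
    exact h
  obtain ⟨f, rfl⟩ := hcount.exists_eq_range hs.nonempty
  refine ⟨partialSups f, (partialSups f).monotone, fun a ↦ ?_⟩
  obtain ⟨_, ⟨n, rfl⟩, han⟩ := hs a
  exact ⟨n, han.trans (le_partialSups f n)⟩

theorem mk_Iic_lt [WellFoundedLT α] (hα : ℵ₀ ≤ #α) (h : (#α).ord = typeLT α) (b : α) :
    #(Iic b) < #α := by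
  rw [← Iio_insert]
  exact mk_insert_le.trans_lt (add_lt_of_lt hα (mk_Iio_lt b h) (one_lt_aleph0.trans_le hα))

theorem not_polarizedPartition_of_monotone_cofinal {κ : Cardinal} (hκ : κ ≠ 0)
    (hsmall : ∀ b : α, #(Iic b) < κ) {g : ℕ → α} (hg : Monotone g)
    (hcof : ∀ a, ∃ n, a ≤ g n) : ¬ PolarizedPartition α κ := by
  intro hrel
  obtain ⟨H, B, i, hH, hB, hhom⟩ := hrel fun p ↦ if p.1 ≤ g p.2 then 1 else 0
  have hcolour {a n} (ha : a ∈ H) (hn : n ∈ B) : a ≤ g n ↔ i = 1 := by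
    have := hhom a ha n hn
    split_ifs at this with h <;> subst this <;> simp [h]
  by_cases hi : i = 1
  · obtain ⟨n, hn⟩ := hB.nonempty
    have hHn : H ⊆ Iic (g n) := fun a ha ↦ (hcolour ha hn).2 hi
    exact (mk_le_mk_of_subset hHn).trans_lt (hsmall (g n)) |>.ne hH
  · obtain ⟨a, ha⟩ : H.Nonempty := by
      rw [← nonempty_coe_sort, ← mk_ne_zero_iff, hH]
      exact hκ
    obtain ⟨k, hak⟩ := hcof a
    obtain ⟨n, hn, hkn⟩ := hB.exists_gt k
    exact hi ((hcolour ha hn).1 (hak.trans (hg hkn.le)))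

end CountableCofinality

theorem splittingNumber_le {F : Set (Set ℕ)} (hF : IsSplittingFamily F) :
    splittingNumber ≤ #F :=
  csInf_le' ⟨F, rfl, hF⟩

theorem exists_infinite_forall_not_split {ι : Type} (S : ι → Set ℕ)
    (h : #ι < splittingNumber) :
    ∃ B : Set ℕ, B.Infinite ∧ ∀ a, ¬ ((B ∩ S a).Infinite ∧ (B \ S a).Infinite) := by
  have hns : ¬ IsSplittingFamily (range S) := fun hsp ↦
    ((splittingNumber_le hsp).trans mk_range_le).not_gt h
  simpa [IsSplittingFamily] using hns

theorem exists_forall_ge_mem_of_finite_diff {B S : Set ℕ} (h : (B \ S).Finite) :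
    ∃ m, ∀ n ∈ B, m ≤ n → n ∈ S := by
  obtain ⟨m, hm⟩ := h.bddAbove
  refine ⟨m + 1, fun n hn hmn ↦ by_contra fun hS ↦ ?_⟩
  have := hm ⟨hn, hS⟩
  omega

theorem exists_eventually_const_of_not_split {B : Set ℕ} {c : ℕ → Fin 2}
    (h : ¬ ((B ∩ {n | c n = 1}).Infinite ∧ (B \ {n | c n = 1}).Infinite)) :
    ∃ (i : Fin 2) (m : ℕ), ∀ n ∈ B, m ≤ n → c n = i := by
  rw [not_and_or, not_infinite, not_infinite, ← sdiff_compl] at h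
  rcases h with h | h
  · obtain ⟨m, hm⟩ := exists_forall_ge_mem_of_finite_diff h
    refine ⟨0, m, fun n hn hmn ↦ ?_⟩
    have : c n ≠ 1 := hm n hn hmn
    omega
  · exact ⟨1, exists_forall_ge_mem_of_finite_diff h⟩

theorem polarizedPartition_of_lt_splittingNumber {ι : Type} (hcof : ℵ₀ < (#ι).ord.cof)
    (hs : #ι < splittingNumber) : PolarizedPartition ι #ι := by
  intro c
  obtain ⟨B, hB, hunsplit⟩ := exists_infinite_forall_not_split (fun a ↦ {n | c (a, n) = 1}) hs
  choose i m hconst using fun a ↦ exists_eventually_const_of_not_split (hunsplit a)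
  obtain ⟨⟨m₀, i₀⟩, hfiber⟩ := infinite_pigeonhole (fun a ↦ (m a, i a))
    (hcof.le.trans (Ordinal.cof_ord_le _)) (mk_le_aleph0.trans_lt hcof)
  refine ⟨_, B \ Iio m₀, i₀, hfiber, hB.sdiff (finite_Iio m₀), ?_⟩
  rintro a ha n ⟨hnB, hn⟩
  simp only [mem_preimage, mem_singleton_iff, Prod.mk.injEq] at ha
  obtain ⟨rfl, rfl⟩ := ha
  exact hconst a n hnB (not_lt.1 hn)

/-- For `ℵ₀ ≤ θ < 𝔰`, the strong polarized relation `(θ, ω) → (θ, ω)` with two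
colors holds iff `cf(θ) > ℵ₀`. -/
theorem polarized_below_splitting_iff (θ : Cardinal) (hθ : ℵ₀ ≤ θ)
    (hθs : θ < splittingNumber) :
    (∀ c : θ.ord.ToType × ℕ → Fin 2,
      ∃ (H : Set θ.ord.ToType) (B : Set ℕ) (i : Fin 2),
        #H = θ ∧ B.Infinite ∧ ∀ α ∈ H, ∀ n ∈ B, c (α, n) = i)
      ↔ ℵ₀ < θ.ord.cof := by
  have hθ₀ : θ ≠ 0 := (aleph0_pos.trans_le hθ).ne'
  change PolarizedPartition θ.ord.ToType θ ↔ _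
  constructor
  · intro hrel
    by_contra! hcof
    have : Nonempty θ.ord.ToType := by simpa using hθ₀
    obtain ⟨g, hg, hgcof⟩ :=
      exists_monotone_cofinal_seq (α := θ.ord.ToType) (by rwa [Ordinal.cof_toType])
    have hsmall (b : θ.ord.ToType) : #(Iic b) < θ := by
      simpa using mk_Iic_lt (by simpa using hθ) (by simp) b
    exact not_polarizedPartition_of_monotone_cofinal hθ₀ hsmall hg hgcof hrel
  · intro hcof
    simpa using polarizedPartition_of_lt_splittingNumber (ι := θ.ord.ToType)
      (by simpa using hcof) (by simpa using hθs)
end
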